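/- Let M be a rooted tree (an indecomposable object). Then every nonzero subspace of H_≤M that is stable under the top-elimination operator E^top_A for every rooted forest A contains φ_∅. Consequently H_≤M is indecomposable: if H_≤M = U ⊕ W with U and W subspaces each stable under all the operators E^top_A, then U = 0 or W = 0. -/

import Mathlib

open scoped Classical

/-- Concrete (labeled) rooted trees: a root with a list of subtrees. -/
inductive RTree : Type
  | node : List RTree → RTree

/-- Shapes of admissible cuts: at each tree, either the full cut
(everything, including the root, goes to the pruned part `P`), or a choice of
an admissible cut of each child subtree.  A `full` occurring strictly inside
corresponds to cutting the edge above that vertex. -/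
inductive CutShape : Type
  | full
  | branch : List CutShape → CutShape

namespace CK

/-- Number of vertices of a forest. -/
def sizeL : List RTree → ℕ
  | [] => 0
  | .node l :: ts => 1 + sizeL l + sizeL ts

/-- All admissible cuts of a forest (a choice of admissible cut of each tree). -/
def cutsF : List RTree → List (List CutShape)
  | [] => [[]]
  | .node l :: ts =>
      (CutShape.full :: (cutsF l).map CutShape.branch).flatMap
        fun c => (cutsF ts).map (c :: ·)

/-- The root part `R_C(F)` of a cut. -/
def Rcut : List RTree → List CutShape → List RTree
  | [], _ => []
  | _ :: _, [] => []
  | .node _ :: ts, .full :: cs => Rcut ts cs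
  | .node l :: ts, .branch ds :: cs => RTree.node (Rcut l ds) :: Rcut ts cs

/-- The pruned part `P_C(F)` of a cut. -/
def Pcut : List RTree → List CutShape → List RTree
  | [], _ => []
  | _ :: _, [] => []
  | .node l :: ts, .full :: cs => RTree.node l :: Pcut ts cs
  | .node l :: ts, .branch ds :: cs => Pcut l ds ++ Pcut ts cs

/-- Number of `full`s occurring in a cut. -/
def fullsL : List CutShape → ℕ
  | [] => 0
  | .full :: cs => 1 + fullsL cs
  | .branch ds :: cs => fullsL ds + fullsL cs

/-- A list of concrete forests containing (representatives of) every forest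
with at most `n` vertices. -/
def forestsUpTo : ℕ → List (List RTree)
  | 0 => [[]]
  | n+1 => [] :: (forestsUpTo n).flatMap fun l => (forestsUpTo n).map fun F => RTree.node l :: F

/-- Isomorphism of rooted trees (non-planar): a root-preserving bijection, i.e.
the lists of subtrees agree up to permutation and isomorphism. -/
inductive Iso : RTree → RTree → Prop
  | node {l₁ l l₂ : List RTree} : List.Forall₂ Iso l₁ l → l.Perm l₂ → Iso (.node l₁) (.node l₂)

/-- Isomorphism classes of rooted trees. -/
abbrev TreeClass : Type := Quot Iso

/-- Isomorphism classes of rooted forests = multisets of tree classes.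
The empty forest is `0`. -/
abbrev ForestClass : Type := Multiset TreeClass

/-- Isomorphism class of a tree. -/
def clT (t : RTree) : TreeClass := Quot.mk _ t

/-- Isomorphism class of a forest. -/
def clF (F : List RTree) : ForestClass := (F.map clT : List TreeClass)

/-- A concrete representative of a forest class. -/
noncomputable def repF (M : ForestClass) : List RTree := M.toList.map Quot.out

/-- A concrete representative of a tree class. -/
noncomputable def repT (T : TreeClass) : RTree := T.out

/-- Number of vertices of a forest class. -/
noncomputable def sizeC (M : ForestClass) : ℕ := sizeL (repF M)

/-- Number of vertices of a tree class. -/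
noncomputable def sizeT (T : TreeClass) : ℕ := sizeL [repT T]

/-- The Hall algebra `H`: finitely supported ℚ-valued functions on
isomorphism classes of rooted forests, with basis the delta functions. -/
abbrev H : Type := ForestClass →₀ ℚ

/-- The basis element `δ_A` of `H`. -/
noncomputable def delta (A : ForestClass) : H := Finsupp.single A 1

/-- `n(A,B;M)`: the number of admissible cuts `C` of `M` with
`P_C(M) ≅ A` and `R_C(M) ≅ B`. -/
noncomputable def nCuts (A B M : ForestClass) : ℕ :=
  (cutsF (repF M)).countP fun c =>
    decide (clF (Pcut (repF M) c) = A ∧ clF (Rcut (repF M) c) = B)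

/-- A finite set of forest classes containing all classes with at most `n`
vertices. -/
noncomputable def forestCand (n : ℕ) : Finset ForestClass :=
  ((forestsUpTo n).map clF).toFinset

/-- A finite set of tree classes containing all classes with at most `n+1`
vertices. -/
noncomputable def treeCand (n : ℕ) : Finset TreeClass :=
  ((forestsUpTo n).map fun F => clT (RTree.node F)).toFinset

/-- The Hall product on basis elements: `δ_A × δ_B = Σ_M n(A,B;M)·δ_M`
(every `M` with `n(A,B;M) ≠ 0` has exactly `sizeC A + sizeC B` vertices). -/
noncomputable def mulBasis (A B : ForestClass) : H :=
  ∑ M ∈ forestCand (sizeC A + sizeC B), (nCuts A B M : ℚ) • delta M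

/-- The Hall product on `H`, extended bilinearly from basis elements. -/
noncomputable def hmul (f g : H) : H :=
  f.sum fun A a => g.sum fun B b => (a * b) • mulBasis A B

/-- The Connes-Kreimer Lie algebra `n_T` (as a vector space): the span of
isomorphism classes of rooted trees. -/
abbrev nT : Type := TreeClass →₀ ℚ

/-- The basis element of `n_T` corresponding to a rooted tree `T`. -/
noncomputable def tau (T : TreeClass) : nT := Finsupp.single T 1

/-- `a(T₁,T₂;T)`: the number of edges `e` of `T` such that the single-edge cut
at `e` has pruned part `≅ T₁` and root part `≅ T₂`. -/
noncomputable def aCount (T₁ T₂ T : TreeClass) : ℕ :=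
  (cutsF [repT T]).countP fun c =>
    decide (fullsL c = 1 ∧ clF (Pcut [repT T] c) = ({T₁} : Multiset TreeClass)
      ∧ clF (Rcut [repT T] c) = ({T₂} : Multiset TreeClass))

/-- The grafting (pre-Lie) product on basis elements:
`T₁ * T₂ = Σ_T a(T₁,T₂;T)·T`. -/
noncomputable def graftBasis (T₁ T₂ : TreeClass) : nT :=
  ∑ T ∈ treeCand (sizeT T₁ + sizeT T₂), (aCount T₁ T₂ T : ℚ) • tau T

/-- The grafting (pre-Lie) product on `n_T`, extended bilinearly. -/
noncomputable def graft (x y : nT) : nT :=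
  x.sum fun T₁ a => y.sum fun T₂ b => (a * b) • graftBasis T₁ T₂

/-- The Connes-Kreimer bracket `[x,y] = x*y - y*x` on `n_T`. -/
noncomputable def ckBracket (x y : nT) : nT := graft x y - graft y x

/-- `Ẽ_A δ_B = Σ_C δ_{R_C(B)}`, the sum over admissible cuts `C` of `B` with
`P_C(B) ≅ A`. -/
noncomputable def elimBasis (A B : ForestClass) : H :=
  (((cutsF (repF B)).filter fun c => decide (clF (Pcut (repF B) c) = A)).map
    fun c => delta (clF (Rcut (repF B) c))).sum

/-- The elimination operator `E_A` (here on `H ≅ H*`, identifying `φ_B` with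
`δ_B`). -/
noncomputable def elim (A : ForestClass) : H →ₗ[ℚ] H :=
  Finsupp.lsum ℚ fun B => LinearMap.toSpanSingleton ℚ H (elimBasis A B)

/-- `Ẽ^top_A δ_B = Σ_C δ_{P_C(B)}`, the sum over admissible cuts `C` of `B`
with `R_C(B) ≅ A`. -/
noncomputable def topElimBasis (A B : ForestClass) : H :=
  (((cutsF (repF B)).filter fun c => decide (clF (Rcut (repF B) c) = A)).map
    fun c => delta (clF (Pcut (repF B) c))).sum

/-- The top-elimination operator `E^top_A`. -/
noncomputable def topElim (A : ForestClass) : H →ₗ[ℚ] H :=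
  Finsupp.lsum ℚ fun B => LinearMap.toSpanSingleton ℚ H (topElimBasis A B)

/-- `H ⊗ H`, realized as finitely supported functions on pairs of classes. -/
abbrev H2 : Type := (ForestClass × ForestClass) →₀ ℚ

/-- `Δ(δ_M) = Σ δ_A ⊗ δ_B`, the sum over ordered pairs `(A,B)` of classes with
`A ⊔ B ≅ M`. -/
noncomputable def deltaBasis (M : ForestClass) : H2 :=
  ∑ A ∈ M.powerset.toFinset, Finsupp.single (A, M - A) 1

/-- The coproduct `Δ : H → H ⊗ H`. -/
noncomputable def coprod : H →ₗ[ℚ] H2 :=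
  Finsupp.lsum ℚ fun M => LinearMap.toSpanSingleton ℚ H2 (deltaBasis M)

/-- `H_≤M`: the subspace of `H* ≅ H` spanned by
`{φ_{P_C(M)} : C an admissible cut of M}` (the subobjects of `M`). -/
noncomputable def Hle (M : ForestClass) : Submodule ℚ H :=
  Submodule.span ℚ
    {v : H | ∃ c ∈ cutsF (repF M), v = delta (clF (Pcut (repF M) c))}

/-! Let `w ≠ 0` lie in a stable subspace and let `B` have the most vertices in its support.
A cut of a forest `B'` with root part `≅ B` forces `|B'| ≥ |B|`, with equality only if the
pruned part is empty, and then `B' ≅ B`. Hence `E^top_B w` is a nonzero multiple of `φ_∅`, so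
`φ_∅` lies in every nonzero stable subspace, and two such subspaces cannot intersect in `0`. -/

theorem sizeL_append : ∀ F G : List RTree, sizeL (F ++ G) = sizeL F + sizeL G
  | [], _ => by simp [sizeL]
  | .node l :: ts, G => by
    simp only [List.cons_append, sizeL, sizeL_append ts G]
    omega

theorem sizeL_eq_zero_iff {F : List RTree} : sizeL F = 0 ↔ F = [] := by
  rcases F with _ | ⟨⟨l⟩, ts⟩ <;> simp [sizeL]

theorem sizeL_cons (t : RTree) (F : List RTree) : sizeL (t :: F) = sizeL [t] + sizeL F := by
  cases t
  simp [sizeL]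

theorem sizeL_singleton_node (l : List RTree) : sizeL [.node l] = sizeL l + 1 := by
  simp [sizeL, add_comm]

theorem sizeL_eq_sum (F : List RTree) : sizeL F = (F.map fun t => sizeL [t]).sum := by
  induction F with
  | nil => simp [sizeL]
  | cons t ts ih => rw [sizeL_cons, ih, List.map_cons, List.sum_cons]

theorem sizeL_eq_of_perm {F G : List RTree} (h : F.Perm G) : sizeL F = sizeL G := by
  rw [sizeL_eq_sum, sizeL_eq_sum, (h.map _).sum_eq]

theorem Iso.sizeL_eq {a b : RTree} (h : Iso a b) : sizeL [a] = sizeL [b] :=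
  Iso.rec (motive_1 := fun a b _ => sizeL [a] = sizeL [b])
    (motive_2 := fun F G _ => sizeL F = sizeL G)
    (fun _ hperm ih => by
      rw [sizeL_singleton_node, sizeL_singleton_node, ih, sizeL_eq_of_perm hperm])
    rfl
    (fun {x y F G} _ _ hxy hFG => by rw [sizeL_cons x, sizeL_cons y, hxy, hFG])
    h

def treeSize : TreeClass → ℕ :=
  Quot.lift (fun t => sizeL [t]) fun _ _ h => h.sizeL_eq

theorem sizeL_eq_sum_treeSize (F : List RTree) :
    sizeL F = ((clF F).map treeSize).sum := by
  rw [sizeL_eq_sum, clF, Multiset.map_coe, Multiset.sum_coe, List.map_map]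
  rfl

theorem clF_repF (M : ForestClass) : clF (repF M) = M := by
  rw [clF, repF, List.map_map, Function.comp_def]
  simp only [clT, Quot.out_eq, List.map_id', Multiset.coe_toList]

theorem sizeL_eq_sizeC_of_clF_eq {F : List RTree} {M : ForestClass} (h : clF F = M) :
    sizeL F = sizeC M := by
  rw [sizeC, sizeL_eq_sum_treeSize, sizeL_eq_sum_treeSize, clF_repF, h]

theorem mem_cutsF_cons {l ts : List RTree} {c : List CutShape} :
    c ∈ cutsF (.node l :: ts) ↔
      (∃ cs ∈ cutsF ts, c = .full :: cs) ∨
      (∃ ds ∈ cutsF l, ∃ cs ∈ cutsF ts, c = .branch ds :: cs) := by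
  simp only [cutsF, List.mem_flatMap, List.mem_cons, List.mem_map]
  constructor
  · rintro ⟨d, rfl | ⟨ds, hds, rfl⟩, cs, hcs, rfl⟩
    · exact Or.inl ⟨cs, hcs, rfl⟩
    · exact Or.inr ⟨ds, hds, cs, hcs, rfl⟩
  · rintro (⟨cs, hcs, rfl⟩ | ⟨ds, hds, cs, hcs, rfl⟩)
    · exact ⟨.full, Or.inl rfl, cs, hcs, rfl⟩
    · exact ⟨.branch ds, Or.inr ⟨ds, hds, rfl⟩, cs, hcs, rfl⟩

theorem sizeL_Pcut_add_sizeL_Rcut :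
    ∀ {F : List RTree} {c : List CutShape}, c ∈ cutsF F →
      sizeL (Pcut F c) + sizeL (Rcut F c) = sizeL F
  | [], c, hc => by
    rw [cutsF, List.mem_singleton] at hc
    simp [hc, Pcut, Rcut, sizeL]
  | .node l :: ts, c, hc => by
    rcases mem_cutsF_cons.1 hc with ⟨cs, hcs, rfl⟩ | ⟨ds, hds, cs, hcs, rfl⟩
    · have := sizeL_Pcut_add_sizeL_Rcut hcs
      simp only [Pcut, Rcut, sizeL] at this ⊢
      omega
    · have hl := sizeL_Pcut_add_sizeL_Rcut hds
      have hts := sizeL_Pcut_add_sizeL_Rcut hcs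
      simp only [Pcut, Rcut, sizeL, sizeL_append]
      omega

theorem Rcut_eq_self_of_Pcut_eq_nil :
    ∀ {F : List RTree} {c : List CutShape}, c ∈ cutsF F → Pcut F c = [] → Rcut F c = F
  | [], _, _, _ => Rcut.eq_1 _
  | .node l :: ts, c, hc, hP => by
    rcases mem_cutsF_cons.1 hc with ⟨cs, hcs, rfl⟩ | ⟨ds, hds, cs, hcs, rfl⟩
    · simp [Pcut] at hP
    · rw [Pcut, List.append_eq_nil_iff] at hP
      rw [Rcut, Rcut_eq_self_of_Pcut_eq_nil hds hP.1, Rcut_eq_self_of_Pcut_eq_nil hcs hP.2]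

/-- The cut with no edges. -/
def noCut : List RTree → List CutShape
  | [] => []
  | .node l :: ts => .branch (noCut l) :: noCut ts

theorem noCut_mem_cutsF : ∀ F : List RTree, noCut F ∈ cutsF F
  | [] => by simp [noCut, cutsF]
  | .node l :: ts =>
    mem_cutsF_cons.2 (Or.inr ⟨_, noCut_mem_cutsF l, _, noCut_mem_cutsF ts, noCut.eq_2 l ts⟩)

theorem Rcut_noCut : ∀ F : List RTree, Rcut F (noCut F) = F
  | [] => Rcut.eq_1 _
  | .node l :: ts => by rw [noCut, Rcut, Rcut_noCut l, Rcut_noCut ts]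

theorem Pcut_eq_nil_and_eq_of_sizeC_le {B B' : ForestClass} (hle : sizeC B' ≤ sizeC B)
    {c : List CutShape} (hc : c ∈ cutsF (repF B')) (hR : clF (Rcut (repF B') c) = B) :
    Pcut (repF B') c = [] ∧ B' = B := by
  have hsize := sizeL_Pcut_add_sizeL_Rcut hc
  rw [sizeL_eq_sizeC_of_clF_eq hR] at hsize
  have hP : Pcut (repF B') c = [] := sizeL_eq_zero_iff.1 (by rw [sizeC] at hle; omega)
  refine ⟨hP, ?_⟩
  rwa [Rcut_eq_self_of_Pcut_eq_nil hc hP, clF_repF] at hR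

theorem topElimBasis_eq_zero_of_sizeC_le {B B' : ForestClass} (hle : sizeC B' ≤ sizeC B)
    (hne : B' ≠ B) : topElimBasis B B' = 0 := by
  rw [topElimBasis, List.filter_eq_nil_iff.2, List.map_nil, List.sum_nil]
  intro c hc hR
  exact hne (Pcut_eq_nil_and_eq_of_sizeC_le hle hc (of_decide_eq_true hR)).2

theorem exists_topElimBasis_self_eq (B : ForestClass) :
    ∃ k : ℕ, 0 < k ∧ topElimBasis B B = (k : ℚ) • delta 0 := by
  set cuts := (cutsF (repF B)).filter fun c => decide (clF (Rcut (repF B) c) = B)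
  have hnoCut : noCut (repF B) ∈ cuts :=
    List.mem_filter.2 ⟨noCut_mem_cutsF _, by rw [Rcut_noCut, clF_repF, decide_eq_true_eq]⟩
  refine ⟨cuts.length, List.length_pos_of_mem hnoCut, ?_⟩
  have hP : ∀ c ∈ cuts, delta (clF (Pcut (repF B) c)) = delta 0 := fun c hc => by
    obtain ⟨hc, hR⟩ := List.mem_filter.1 hc
    rw [(Pcut_eq_nil_and_eq_of_sizeC_le le_rfl hc (of_decide_eq_true hR)).1]
    rfl
  rw [topElimBasis, List.map_congr_left hP, List.map_const', List.sum_replicate,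
    Nat.cast_smul_eq_nsmul]

theorem topElim_apply (A : ForestClass) (w : H) :
    topElim A w = ∑ B ∈ w.support, w B • topElimBasis A B := by
  simp [topElim, Finsupp.lsum_apply, Finsupp.sum, LinearMap.toSpanSingleton_apply]

theorem exists_topElim_eq_smul_delta_zero {w : H} (hw : w ≠ 0) :
    ∃ A : ForestClass, ∃ q : ℚ, q ≠ 0 ∧ topElim A w = q • delta 0 := by
  obtain ⟨B, hB, hmax⟩ := w.support.exists_max_image sizeC (Finsupp.support_nonempty_iff.2 hw)
  obtain ⟨k, hk, hBB⟩ := exists_topElimBasis_self_eq B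
  refine ⟨B, w B * k, mul_ne_zero (Finsupp.mem_support_iff.1 hB) (by positivity), ?_⟩
  rw [topElim_apply, Finset.sum_eq_single_of_mem B hB, hBB, smul_smul]
  intro B' hB' hne
  rw [topElimBasis_eq_zero_of_sizeC_le (hmax B' hB') hne, smul_zero]

theorem delta_zero_mem_of_topElim_mem {U : Submodule ℚ H}
    (hU : ∀ A : ForestClass, ∀ w ∈ U, topElim A w ∈ U) (hne : U ≠ ⊥) :
    delta 0 ∈ U := by
  obtain ⟨w, hwU, hw⟩ := (Submodule.ne_bot_iff U).1 hne
  obtain ⟨A, q, hq, hA⟩ := exists_topElim_eq_smul_delta_zero hw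
  have hqδ : q • delta 0 ∈ U := hA ▸ hU A w hwU
  exact (U.smul_mem_iff hq).1 hqδ

theorem delta_zero_ne_zero : delta 0 ≠ 0 :=
  Finsupp.single_ne_zero.2 one_ne_zero

/-- STATEMENT 18: for `M` a rooted tree (an indecomposable object), every
nonzero subspace of `H_≤M` stable under all top-elimination operators
`E^top_A` contains `φ_∅`; consequently `H_≤M` is indecomposable: it is not
the direct sum of two nonzero stable subspaces. -/
theorem Hle_indecomposable (M : TreeClass) :
    (∀ U : Submodule ℚ H, U ≤ Hle ({M} : Multiset TreeClass) →
      (∀ A : ForestClass, ∀ w ∈ U, topElim A w ∈ U) → U ≠ ⊥ → delta 0 ∈ U) ∧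
    (∀ U W : Submodule ℚ H,
      U ≤ Hle ({M} : Multiset TreeClass) → W ≤ Hle ({M} : Multiset TreeClass) →
      (∀ A : ForestClass, ∀ w ∈ U, topElim A w ∈ U) →
      (∀ A : ForestClass, ∀ w ∈ W, topElim A w ∈ W) →
      U ⊓ W = ⊥ → U ⊔ W = Hle ({M} : Multiset TreeClass) →
      U = ⊥ ∨ W = ⊥) := by
  refine ⟨fun U _ hU hne => delta_zero_mem_of_topElim_mem hU hne, ?_⟩
  intro U W _ _ hU hW hUW _
  by_contra! hne
  have hmem : delta 0 ∈ U ⊓ W :=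
    ⟨delta_zero_mem_of_topElim_mem hU hne.1, delta_zero_mem_of_topElim_mem hW hne.2⟩
  rw [hUW, Submodule.mem_bot] at hmem
  exact delta_zero_ne_zero hmem

end CK
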